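/- Let ν be a natural number, ĝ ∈ ℂ^{ν+1}, and define G₀(ω) = 2·Re(Σ_{k=0}^{ν} ĝ_k e^{ikω}). Let M : ℝ → ℝ be a measurable function that is integrable on [−π,π]. Assume 1+G₀(ω) > 0 for all ω ∈ [−π,π], and assume the stationarity conditions: for every integer k with |k| ≤ ν, ∫_{−π}^{π} e^{ikω}/(1+G₀(ω)) dω = −∫_{−π}^{π} M(ω)·e^{ikω} dω. Then (1/2π)∫_{−π}^{π} M(ω)·(1+G₀(ω)) dω = −1. -/

import Mathlib

/-!
`1 + G₀` is a trigonometric polynomial of degree `ν`: it lies in the complex span of the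
monomials `e^{ikω}`, `|k| ≤ ν`. The stationarity conditions say `∫ e · (1 + G₀)⁻¹ = ∫ e · (-M)`
for each such monomial `e`, so by linearity also for `e = 1 + G₀`, where the left side is `2π`.
-/

open Complex Real MeasureTheory

/-- The real trigonometric polynomial `G₀(ω) = 2 Re(Σ_k ĝ_k e^{ikω})`. -/
noncomputable def G0 {ν : ℕ} (g : Fin (ν + 1) → ℂ) (ω : ℝ) : ℝ :=
  2 * (∑ k : Fin (ν + 1), g k * Complex.exp (Complex.I * ((k : ℕ) : ℂ) * (ω : ℂ))).re

open ComplexConjugate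

noncomputable def trigMonomial (k : ℤ) (ω : ℝ) : ℂ := exp (I * k * ω)

noncomputable def trigPolySpace (ν : ℕ) : Submodule ℂ (ℝ → ℂ) :=
  Submodule.span ℂ (trigMonomial '' {k | |k| ≤ ν})

lemma continuous_trigMonomial (k : ℤ) : Continuous (trigMonomial k) := by
  unfold trigMonomial; fun_prop

lemma trigMonomial_zero (ω : ℝ) : trigMonomial 0 ω = 1 := by
  simp [trigMonomial]

lemma conj_trigMonomial (k : ℤ) (ω : ℝ) : conj (trigMonomial k ω) = trigMonomial (-k) ω := by
  rw [trigMonomial, trigMonomial, ← exp_conj]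
  simp

lemma continuous_G0 {ν : ℕ} (g : Fin (ν + 1) → ℂ) : Continuous (G0 g) := by
  unfold G0; fun_prop

lemma trigMonomial_mem_trigPolySpace {ν : ℕ} {k : ℤ} (hk : |k| ≤ ν) :
    trigMonomial k ∈ trigPolySpace ν :=
  Submodule.subset_span ⟨k, hk, rfl⟩

lemma ofReal_G0 {ν : ℕ} (g : Fin (ν + 1) → ℂ) (ω : ℝ) :
    (G0 g ω : ℂ) =
      ∑ k : Fin (ν + 1), (g k * trigMonomial k ω + conj (g k) * trigMonomial (-k) ω) := by
  have hS : ∑ k : Fin (ν + 1), g k * exp (I * ((k : ℕ) : ℂ) * ω) =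
      ∑ k : Fin (ν + 1), g k * trigMonomial k ω := by
    simp [trigMonomial]
  rw [G0, hS, ← add_conj, map_sum, ← Finset.sum_add_distrib]
  simp only [map_mul, conj_trigMonomial]

lemma one_add_G0_mem_trigPolySpace {ν : ℕ} (g : Fin (ν + 1) → ℂ) :
    (fun ω => ((1 + G0 g ω : ℝ) : ℂ)) ∈ trigPolySpace ν := by
  have hk : ∀ k : Fin (ν + 1), |((k : ℕ) : ℤ)| ≤ ν := fun k => by
    rw [Nat.abs_cast]; exact_mod_cast Nat.lt_succ_iff.mp k.isLt
  have : (fun ω => ((1 + G0 g ω : ℝ) : ℂ)) = trigMonomial 0 +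
      ∑ k : Fin (ν + 1), (g k • trigMonomial k + conj (g k) • trigMonomial (-k)) := by
    ext ω; simp [ofReal_G0, trigMonomial_zero]
  rw [this]
  refine add_mem (trigMonomial_mem_trigPolySpace (by simp)) (sum_mem fun k _ => add_mem ?_ ?_)
  · exact Submodule.smul_mem _ _ (trigMonomial_mem_trigPolySpace (hk k))
  · exact Submodule.smul_mem _ _ (trigMonomial_mem_trigPolySpace (by rw [abs_neg]; exact hk k))

lemma intervalIntegral_mul_eq_of_mem_span {a b : ℝ} {μ : Measure ℝ} {f h : ℝ → ℂ}
    {s : Set (ℝ → ℂ)}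
    (hs : ∀ e ∈ s, IntervalIntegrable (fun x => e x * f x) μ a b ∧
      IntervalIntegrable (fun x => e x * h x) μ a b ∧
      ∫ x in a..b, e x * f x ∂μ = ∫ x in a..b, e x * h x ∂μ)
    {T : ℝ → ℂ} (hT : T ∈ Submodule.span ℂ s) :
    ∫ x in a..b, T x * f x ∂μ = ∫ x in a..b, T x * h x ∂μ := by
  suffices IntervalIntegrable (fun x => T x * f x) μ a b ∧
      IntervalIntegrable (fun x => T x * h x) μ a b ∧
      ∫ x in a..b, T x * f x ∂μ = ∫ x in a..b, T x * h x ∂μ from this.2.2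
  induction hT using Submodule.span_induction with
  | mem e he => exact hs e he
  | zero =>
    simp only [Pi.zero_apply, zero_mul]
    exact ⟨.zero, .zero, trivial⟩
  | add T U _ _ hT hU =>
    simp only [Pi.add_apply, add_mul]
    refine ⟨hT.1.add hU.1, hT.2.1.add hU.2.1, ?_⟩
    rw [intervalIntegral.integral_add hT.1 hU.1, intervalIntegral.integral_add hT.2.1 hU.2.1,
      hT.2.2, hU.2.2]
  | smul c T _ hT =>
    simp only [Pi.smul_apply, smul_eq_mul, mul_assoc]
    refine ⟨hT.1.const_mul c, hT.2.1.const_mul c, ?_⟩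
    rw [intervalIntegral.integral_const_mul, intervalIntegral.integral_const_mul, hT.2.2]

theorem stmt7_general (ν : ℕ) (g : Fin (ν + 1) → ℂ) (M : ℝ → ℝ)
    (hMint : IntegrableOn M (Set.Icc (-π) π))
    (hpos : ∀ ω ∈ Set.Icc (-π) π, 0 < 1 + G0 g ω)
    (hstat : ∀ k : ℤ, |k| ≤ (ν : ℤ) →
      (∫ ω in (-π)..π,
          Complex.exp (Complex.I * (k : ℂ) * (ω : ℂ)) / ((1 + G0 g ω : ℝ) : ℂ)) =
        -∫ ω in (-π)..π,
            ((M ω : ℝ) : ℂ) * Complex.exp (Complex.I * (k : ℂ) * (ω : ℂ))) :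
    (1 / (2 * π)) * ∫ ω in (-π)..π, M ω * (1 + G0 g ω) = -1 := by
  set D : ℝ → ℂ := fun ω => ((1 + G0 g ω : ℝ) : ℂ)
  have hle : -π ≤ π := by linarith [pi_pos]
  have hD : ∀ ω ∈ Set.uIcc (-π) π, D ω ≠ 0 := fun ω hω =>
    ofReal_ne_zero.mpr (hpos ω (by rwa [Set.uIcc_of_le hle] at hω)).ne'
  have hDinv : ContinuousOn (fun ω => (D ω)⁻¹) (Set.uIcc (-π) π) :=
    (continuous_ofReal.comp (continuous_const.add (continuous_G0 g))).continuousOn.inv₀ hD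
  have hM : IntervalIntegrable (fun ω => -((M ω : ℝ) : ℂ)) volume (-π) π := by
    rw [intervalIntegrable_iff_integrableOn_Icc_of_le hle]
    exact hMint.ofReal.neg
  have key : ∫ ω in (-π)..π, D ω * (D ω)⁻¹ = ∫ ω in (-π)..π, D ω * -(M ω : ℂ) := by
    refine intervalIntegral_mul_eq_of_mem_span ?_ (one_add_G0_mem_trigPolySpace g)
    rintro _ ⟨k, hk, rfl⟩
    have he := (continuous_trigMonomial k).continuousOn (s := Set.uIcc (-π) π)
    refine ⟨(he.mul hDinv).intervalIntegrable, hM.continuousOn_mul he, ?_⟩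
    simpa [D, trigMonomial, div_eq_mul_inv, mul_comm, intervalIntegral.integral_neg] using hstat k hk
  rw [intervalIntegral.integral_congr (fun ω hω => mul_inv_cancel₀ (hD ω hω))] at key
  have hI : ((∫ ω in (-π)..π, M ω * (1 + G0 g ω) : ℝ) : ℂ) = ((-(2 * π) : ℝ) : ℂ) := calc
    _ = ∫ ω in (-π)..π, ((M ω * (1 + G0 g ω) : ℝ) : ℂ) := intervalIntegral.integral_ofReal.symm
    _ = -∫ ω in (-π)..π, D ω * -(M ω : ℂ) := by simp [D, mul_comm]
    _ = ((-(2 * π) : ℝ) : ℂ) := by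
      rw [← key, intervalIntegral.integral_const, real_smul, mul_one]
      push_cast
      ring
  rw [ofReal_inj.mp hI]
  field_simp

/-- Key identity (gm3) in the proof of Property 2: if `G₀` satisfies the first-order
stationarity conditions for the Ungerboeck MILB, then `(1/2π)∫ M(1+G₀) = −1`. -/
theorem stmt7 (ν : ℕ) (g : Fin (ν + 1) → ℂ) (M : ℝ → ℝ)
    (hMmeas : Measurable M) (hMint : IntegrableOn M (Set.Icc (-π) π))
    (hpos : ∀ ω ∈ Set.Icc (-π) π, 0 < 1 + G0 g ω)
    (hstat : ∀ k : ℤ, |k| ≤ (ν : ℤ) →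
      (∫ ω in (-π)..π,
          Complex.exp (Complex.I * (k : ℂ) * (ω : ℂ)) / ((1 + G0 g ω : ℝ) : ℂ)) =
        -∫ ω in (-π)..π,
            ((M ω : ℝ) : ℂ) * Complex.exp (Complex.I * (k : ℂ) * (ω : ℂ))) :
    (1 / (2 * π)) * ∫ ω in (-π)..π, M ω * (1 + G0 g ω) = -1 :=
  stmt7_general ν g M hMint hpos hstat
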